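/- arXiv:1806.06656 — 3 statements merged into one kernel-verified Lean document; each statement's English description precedes it below -/
import Mathlib

section
/- For all real numbers s, t > 0 with s ≠ t and 0 < a < 1, one has |s - t|^a ≤ (1/a) * ((s + t)/|s - t|)^(1-a) * |s^a - t^a|. -/
/-- Key step: for `0 < t < s` and `0 < a < 1`, `a * s^(a-1) * (s-t) ≤ s^a - t^a`. -/
lemma key_step {s t a : ℝ} (hs : 0 < s) (ht : 0 < t) (hts : t < s)
    (ha0 : 0 < a) (ha1 : a < 1) :
    a * s ^ (a - 1) * (s - t) ≤ s ^ a - t ^ a := by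
  have hx : (0:ℝ) < t / s := div_pos ht hs
  have hb : (1 + (t / s - 1)) ^ a ≤ 1 + a * (t / s - 1) :=
    rpow_one_add_le_one_add_mul_self (by linarith) ha0.le ha1.le
  rw [add_sub_cancel] at hb
  have hts' : t ^ a = (t / s) ^ a * s ^ a := by
    rw [← Real.mul_rpow hx.le hs.le, div_mul_cancel₀ _ hs.ne']
  have hsa : (0:ℝ) < s ^ a := Real.rpow_pos_of_pos hs a
  have h1 : t ^ a ≤ (1 + a * (t / s - 1)) * s ^ a := by
    rw [hts']
    exact mul_le_mul_of_nonneg_right hb hsa.le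
  have h2 : s ^ (a - 1) = s ^ a / s := Real.rpow_sub_one hs.ne' a
  have h3 : a * (t / s - 1) * s ^ a = - (a * s ^ (a - 1) * (s - t)) := by
    rw [h2]
    field_simp
    ring
  nlinarith [h1, h3]

/-- For all real numbers `s, t > 0` with `s ≠ t` and `0 < a < 1`, one has
`|s - t|^a ≤ (1/a) * ((s + t)/|s - t|)^(1-a) * |s^a - t^a|`. -/
theorem stmt_1 (s t a : ℝ) (hs : 0 < s) (ht : 0 < t) (hst : s ≠ t)
    (ha0 : 0 < a) (ha1 : a < 1) :
    |s - t| ^ a ≤ (1 / a) * ((s + t) / |s - t|) ^ (1 - a) * |s ^ a - t ^ a| := by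
  wlog h : t < s with H
  · push_neg at h
    have h' : s < t := lt_of_le_of_ne h hst
    have := H t s a ht hs hst.symm ha0 ha1 h'
    rwa [abs_sub_comm t s, add_comm t s, abs_sub_comm (t ^ a) (s ^ a)] at this
  have hd : 0 < s - t := sub_pos.mpr h
  have hsa : t ^ a < s ^ a := Real.rpow_lt_rpow ht.le h ha0
  rw [abs_of_pos hd, abs_of_pos (sub_pos.mpr hsa)]
  have key := key_step hs ht h ha0 ha1
  have hu : (0:ℝ) < s + t := by linarith
  have hud : (0:ℝ) < (s + t) / (s - t) := div_pos hu hd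
  have hudp : (0:ℝ) < ((s + t) / (s - t)) ^ (1 - a) := Real.rpow_pos_of_pos hud _
  have step2 : (1 / a) * ((s + t) / (s - t)) ^ (1 - a) * (a * s ^ (a - 1) * (s - t))
      ≤ (1 / a) * ((s + t) / (s - t)) ^ (1 - a) * (s ^ a - t ^ a) := by
    apply mul_le_mul_of_nonneg_left key
    positivity
  have hsimp : (1 / a) * ((s + t) / (s - t)) ^ (1 - a) * (a * s ^ (a - 1) * (s - t))
      = ((s + t) / (s - t)) ^ (1 - a) * (s ^ (a - 1) * (s - t)) := by
    field_simp
  have step3 : (s / (s - t)) ^ (1 - a) ≤ ((s + t) / (s - t)) ^ (1 - a) := by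
    apply Real.rpow_le_rpow (by positivity) _ (by linarith)
    gcongr
    linarith
  have hsd : (0:ℝ) < s ^ (a - 1) * (s - t) := by
    have := Real.rpow_pos_of_pos hs (a - 1); positivity
  have step4 : (s / (s - t)) ^ (1 - a) * (s ^ (a - 1) * (s - t)) = (s - t) ^ a := by
    rw [Real.div_rpow hs.le hd.le]
    have e1 : s ^ (1 - a) * s ^ (a - 1) = 1 := by
      rw [← Real.rpow_add hs]; norm_num
    have e2 : (s - t) ^ a * (s - t) ^ (1 - a) = s - t := by
      rw [← Real.rpow_add hd]; norm_num
    field_simp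
    nlinarith [e1, e2, Real.rpow_pos_of_pos hd (1 - a), Real.rpow_pos_of_pos hs (1-a), Real.rpow_pos_of_pos hs (a-1), Real.rpow_pos_of_pos hd a]
  calc (s - t) ^ a = (s / (s - t)) ^ (1 - a) * (s ^ (a - 1) * (s - t)) := step4.symm
    _ ≤ ((s + t) / (s - t)) ^ (1 - a) * (s ^ (a - 1) * (s - t)) :=
        mul_le_mul_of_nonneg_right step3 hsd.le
    _ = (1 / a) * ((s + t) / (s - t)) ^ (1 - a) * (a * s ^ (a - 1) * (s - t)) := hsimp.symm
    _ ≤ _ := step2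
end

section
/- Let 1 ≤ p < ∞ and let w be a weight on ℝⁿ such that w^{-1/(p-1)} is locally integrable (when p = 1, assume ess inf_{|x|≤A} w > 0 for every A > 0). Let G ⊆ L^p(w). If (i) sup_{f∈G} ‖f‖_{L^p(w)} < ∞, (ii) for every ε > 0 there exists A > 0 with (∫_{|x|>A} |f|^p w dx)^{1/p} < ε for all f ∈ G, and (iii) for every ε > 0 there exists δ > 0 with (∫_{ℝⁿ} |f(x+u) - f(x)|^p w(x) dx)^{1/p} < ε for all f ∈ G and |u| < δ, then G is relatively compact in L^p(w). -/
/-!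
The weight hypotheses make `L^p(w)` embed continuously into `L¹_loc`: by Hölder against the dual
weight `w^{-1/(p-1)}` when `p > 1`, and by the local lower bound on `w` when `p = 1`. Consequently,
for a fixed radius `r` the ball averages `f_r(x) = ⨍_{B(x,r)} f` of the functions of the family
are bounded at every point and equicontinuous on compact sets, with a modulus controlled by the
`L^p(w)`-continuity of translates (iii). A diagonal extraction along a dense sequence of points and
the radii `1/(m+1)` gives a subsequence whose averages converge uniformly on every ball (this is
the Arzelà–Ascoli step). Jensen's inequality on each ball gives
`‖f - f_r‖ ≤ sup_{|u|<r} ‖f(· + u) - f‖`, so by (ii) and (iii) every function of the family is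
uniformly close to the truncated average `1_{|x| ≤ A} f_r`, and the subsequence is Cauchy in
`L^p(w)`.
-/

open MeasureTheory Metric Filter ENNReal

/-- The quantity `∫_{ℝⁿ} |f(x)|^p w(x) dx`, as an extended nonnegative real. -/
noncomputable def wInt {n : ℕ} (w : EuclideanSpace ℝ (Fin n) → ℝ) (p : ℝ)
    (f : EuclideanSpace ℝ (Fin n) → ℝ) : ℝ≥0∞ :=
  ∫⁻ x, ENNReal.ofReal (|f x| ^ p * w x)

open Topology

theorem le_ofReal_of_rpow_lt_ofReal_rpow {a : ℝ≥0∞} {p ε : ℝ} (hp : 0 < p) (hε : 0 ≤ ε)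
    (h : a ^ p < ENNReal.ofReal (ε ^ p)) : a ≤ ENNReal.ofReal ε := by
  rw [← ENNReal.ofReal_rpow_of_nonneg hε hp.le, ENNReal.rpow_lt_rpow_iff hp] at h
  exact h.le

section WeightedNorms

variable {α : Type*} [MeasurableSpace α] {ν : Measure α} {w : α → ℝ}

theorem eLpNorm_withDensity_ofReal_rpow_eq_lintegral {p : ℝ} (hp : 0 < p) (hw : Measurable w)
    (f : α → ℝ) :
    eLpNorm f (ENNReal.ofReal p) (ν.withDensity fun x => ENNReal.ofReal (w x)) ^ p =
      ∫⁻ x, ‖f x‖ₑ ^ p * ENNReal.ofReal (w x) ∂ν := by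
  rw [eLpNorm_eq_lintegral_rpow_enorm_toReal (by simpa using hp) ofReal_ne_top,
    ENNReal.toReal_ofReal hp.le, ← ENNReal.rpow_mul, one_div_mul_cancel hp.ne', ENNReal.rpow_one,
    lintegral_withDensity_eq_lintegral_mul_non_measurable _ hw.ennreal_ofReal
      (ae_of_all _ fun _ => ofReal_lt_top)]
  simp only [Pi.mul_apply, mul_comm]

theorem lintegral_ofReal_abs_rpow_mul_eq_rpow_eLpNorm {p : ℝ} (hp : 0 < p) (hw : Measurable w)
    (f : α → ℝ) :
    ∫⁻ x, ENNReal.ofReal (|f x| ^ p * w x) ∂ν =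
      eLpNorm f (ENNReal.ofReal p) (ν.withDensity fun x => ENNReal.ofReal (w x)) ^ p := by
  rw [eLpNorm_withDensity_ofReal_rpow_eq_lintegral hp hw]
  refine lintegral_congr fun x => ?_
  rw [ENNReal.ofReal_mul (by positivity), Real.enorm_eq_ofReal_abs,
    ENNReal.ofReal_rpow_of_nonneg (abs_nonneg _) hp.le]

theorem setLIntegral_ofReal_abs_rpow_mul_eq_rpow_eLpNorm_indicator {p : ℝ} (hp : 0 < p)
    (hw : Measurable w) {S : Set α} (hS : MeasurableSet S) (f : α → ℝ) :
    ∫⁻ x in S, ENNReal.ofReal (|f x| ^ p * w x) ∂ν =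
      eLpNorm (S.indicator f) (ENNReal.ofReal p)
        (ν.withDensity fun x => ENNReal.ofReal (w x)) ^ p := by
  rw [lintegral_ofReal_abs_rpow_mul_eq_rpow_eLpNorm hp hw, eLpNorm_indicator_eq_eLpNorm_restrict hS,
    restrict_withDensity hS]

theorem setLIntegral_enorm_le_inv_mul_eLpNorm_one_withDensity {c : ℝ} (hc : 0 < c) {S : Set α}
    (hwc : ∀ᵐ x ∂ν.restrict S, c ≤ w x) (hw : Measurable w) (f : α → ℝ) :
    ∫⁻ x in S, ‖f x‖ₑ ∂ν ≤
      (ENNReal.ofReal c)⁻¹ * eLpNorm f 1 (ν.withDensity fun x => ENNReal.ofReal (w x)) := by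
  have hc' : ENNReal.ofReal c ≠ 0 := by simpa using hc
  rw [eLpNorm_one_eq_lintegral_enorm, lintegral_withDensity_eq_lintegral_mul_non_measurable _
      hw.ennreal_ofReal (ae_of_all _ fun _ => ofReal_lt_top),
    ← lintegral_const_mul' _ _ (ENNReal.inv_ne_top.2 hc')]
  refine (lintegral_mono_ae ?_).trans (setLIntegral_le_lintegral S _)
  filter_upwards [hwc] with x hx
  calc ‖f x‖ₑ = (ENNReal.ofReal c)⁻¹ * (ENNReal.ofReal c * ‖f x‖ₑ) := by
        rw [← mul_assoc, ENNReal.inv_mul_cancel hc' ofReal_ne_top, one_mul]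
    _ ≤ (ENNReal.ofReal c)⁻¹ * (ENNReal.ofReal (w x) * ‖f x‖ₑ) := by
        gcongr

theorem setLIntegral_enorm_le_mul_eLpNorm_withDensity {p : ℝ} (hp : 1 < p) (hw : Measurable w)
    {S : Set α} (hw_pos : ∀ᵐ x ∂ν.restrict S, 0 < w x) {f : α → ℝ} (hf : Measurable f) :
    ∫⁻ x in S, ‖f x‖ₑ ∂ν ≤
      (∫⁻ x in S, ENNReal.ofReal (w x ^ (-(1 : ℝ) / (p - 1))) ∂ν) ^ (1 - 1 / p) *
        eLpNorm f (ENNReal.ofReal p) (ν.withDensity fun x => ENNReal.ofReal (w x)) := by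
  have hp0 : 0 < p := by linarith
  have hpq : p.HolderConjugate (p / (p - 1)) := .conjExponent hp
  set W : α → ℝ≥0∞ := fun x => ENNReal.ofReal (w x)
  have hW : Measurable W := hw.ennreal_ofReal
  -- Hölder with exponents `p` and `p / (p - 1)` applied to `‖f‖ = (‖f‖ W^{1/p}) W^{-1/p}`
  have hsplit : ∫⁻ x in S, ‖f x‖ₑ ∂ν =
      ∫⁻ x in S, ((fun x => ‖f x‖ₑ * W x ^ (1 / p)) * fun x => W x ^ (-(1 / p))) x ∂ν := by
    refine lintegral_congr_ae ?_
    filter_upwards [hw_pos] with x hx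
    have hWx : W x ≠ 0 := by simpa [W] using hx
    rw [Pi.mul_apply, mul_assoc, ← ENNReal.rpow_add _ _ hWx ofReal_ne_top, add_neg_cancel,
      ENNReal.rpow_zero, mul_one]
  have hfirst : ∫⁻ x in S, (‖f x‖ₑ * W x ^ (1 / p)) ^ p ∂ν ≤
      eLpNorm f (ENNReal.ofReal p) (ν.withDensity W) ^ p := by
    rw [eLpNorm_withDensity_ofReal_rpow_eq_lintegral hp0 hw]
    refine (lintegral_mono fun x => le_of_eq ?_).trans (setLIntegral_le_lintegral S _)
    rw [ENNReal.mul_rpow_of_nonneg _ _ hp0.le, ← ENNReal.rpow_mul, one_div_mul_cancel hp0.ne',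
      ENNReal.rpow_one]
  have hsecond : ∫⁻ x in S, (W x ^ (-(1 / p))) ^ (p / (p - 1)) ∂ν =
      ∫⁻ x in S, ENNReal.ofReal (w x ^ (-(1 : ℝ) / (p - 1))) ∂ν := by
    refine lintegral_congr_ae ?_
    filter_upwards [hw_pos] with x hx
    rw [← ENNReal.rpow_mul, ENNReal.ofReal_rpow_of_pos hx]
    congr 2
    field_simp
  rw [hsplit]
  refine (ENNReal.lintegral_mul_le_Lp_mul_Lq _ hpq
    (hf.enorm.mul (hW.pow_const _)).aemeasurable (hW.pow_const _).aemeasurable).trans ?_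
  rw [hsecond, mul_comm, show 1 / (p / (p - 1)) = 1 - 1 / p by field_simp]
  gcongr
  calc (∫⁻ x in S, (‖f x‖ₑ * W x ^ (1 / p)) ^ p ∂ν) ^ (1 / p)
      ≤ (eLpNorm f (ENNReal.ofReal p) (ν.withDensity W) ^ p) ^ (1 / p) := by gcongr
    _ = eLpNorm f (ENNReal.ofReal p) (ν.withDensity W) := by
      rw [← ENNReal.rpow_mul, mul_one_div_cancel hp0.ne', ENNReal.rpow_one]

end WeightedNorms

theorem isFiniteMeasureOnCompacts_withDensity_ofReal {X : Type*} [TopologicalSpace X]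
    [MeasurableSpace X] {ν : Measure X} [SFinite ν] {w : X → ℝ} (hw : LocallyIntegrable w ν) :
    IsFiniteMeasureOnCompacts (ν.withDensity fun x => ENNReal.ofReal (w x)) :=
  ⟨fun K hK => by
    rw [withDensity_apply' _ K]
    exact (hw.integrableOn_isCompact hK).lintegral_lt_top⟩

def LpEmbedsL1Loc {X : Type*} [TopologicalSpace X] [MeasurableSpace X] (p : ℝ≥0∞)
    (μ ν : Measure X) : Prop :=
  ∀ K : Set X, IsCompact K → ∃ C : ℝ≥0∞, C ≠ ∞ ∧
    ∀ f : X → ℝ, Measurable f → ∫⁻ x in K, ‖f x‖ₑ ∂ν ≤ C * eLpNorm f p μ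

theorem LpEmbedsL1Loc.locallyIntegrable {X : Type*} [TopologicalSpace X] [LocallyCompactSpace X]
    [MeasurableSpace X] {p : ℝ≥0∞} {μ ν : Measure X} (hemb : LpEmbedsL1Loc p μ ν) {f : X → ℝ}
    (hf : Measurable f) (hfp : eLpNorm f p μ ≠ ∞) : LocallyIntegrable f ν := by
  refine locallyIntegrable_iff.2 fun K hK => ⟨hf.aestronglyMeasurable, ?_⟩
  obtain ⟨C, hC, hCK⟩ := hemb K hK
  exact (hCK f hf).trans_lt (ENNReal.mul_lt_top hC.lt_top hfp.lt_top)

theorem lpEmbedsL1Loc_withDensity {E : Type*} [NormedAddCommGroup E] [MeasurableSpace E]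
    {ν : Measure E} {w : E → ℝ} {p : ℝ} (hp : 1 ≤ p) (hw : Measurable w)
    (hw_pos : ∀ᵐ x ∂ν, 0 < w x)
    (hw' : 1 < p → LocallyIntegrable (fun x => w x ^ (-(1 : ℝ) / (p - 1))) ν)
    (hw1 : p = 1 → ∀ A : ℝ, 0 < A → 0 < essInf w (ν.restrict (closedBall (0 : E) A))) :
    LpEmbedsL1Loc (ENNReal.ofReal p) (ν.withDensity fun x => ENNReal.ofReal (w x)) ν := by
  intro K hK
  rcases hp.eq_or_lt with rfl | hp1
  · obtain ⟨A, hA, hKA⟩ := hK.isBounded.subset_closedBall_lt 0 (0 : E)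
    have he := hw1 rfl A hA
    refine ⟨(ENNReal.ofReal (essInf w (ν.restrict (closedBall 0 A))))⁻¹,
      ENNReal.inv_ne_top.2 (by simpa using he), fun f _ => ?_⟩
    rw [ENNReal.ofReal_one]
    refine setLIntegral_enorm_le_inv_mul_eLpNorm_one_withDensity he
      (ae_restrict_of_ae_restrict_of_subset hKA ?_) hw f
    exact ae_essInf_le (isBoundedUnder_of_eventually_ge (ae_restrict_of_ae (hw_pos.mono
      fun _ hx => hx.le)))
  · exact ⟨_, rpow_ne_top_of_nonneg (by simpa using inv_le_one_of_one_le₀ hp)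
      ((hw' hp1).integrableOn_isCompact hK).lintegral_lt_top.ne,
      fun f hf =>
        setLIntegral_enorm_le_mul_eLpNorm_withDensity hp1 hw (ae_restrict_of_ae hw_pos) hf⟩

section Averages

variable {α F : Type*} [MeasurableSpace α] [NormedAddCommGroup F] [NormedSpace ℝ F]

theorem enorm_average_le_laverage (ρ : Measure α) (g : α → F) :
    ‖⨍ x, g x ∂ρ‖ₑ ≤ ⨍⁻ x, ‖g x‖ₑ ∂ρ :=
  enorm_integral_le_lintegral_enorm _

theorem enorm_average_rpow_le_laverage {ρ : Measure α} [IsFiniteMeasure ρ] [NeZero ρ] {q : ℝ}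
    (hq : 1 ≤ q) {g : α → F} (hg : AEStronglyMeasurable g ρ) :
    ‖⨍ x, g x ∂ρ‖ₑ ^ q ≤ ⨍⁻ x, ‖g x‖ₑ ^ q ∂ρ := by
  have hq0 : 0 < q := by linarith
  have hL1 : ‖⨍ x, g x ∂ρ‖ₑ ≤ eLpNorm g (ENNReal.ofReal q) ((ρ Set.univ)⁻¹ • ρ) := by
    refine (enorm_average_le_laverage ρ g).trans ?_
    rw [laverage_eq', ← eLpNorm_one_eq_lintegral_enorm]
    exact eLpNorm_le_eLpNorm_of_exponent_le (by simpa using hq) (hg.smul_measure _)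
  rw [eLpNorm_eq_lintegral_rpow_enorm_toReal (by simpa using hq0) ofReal_ne_top,
    ENNReal.toReal_ofReal hq0.le] at hL1
  calc ‖⨍ x, g x ∂ρ‖ₑ ^ q ≤ ((⨍⁻ x, ‖g x‖ₑ ^ q ∂ρ) ^ (1 / q)) ^ q :=
        ENNReal.rpow_le_rpow hL1 hq0.le
    _ = ⨍⁻ x, ‖g x‖ₑ ^ q ∂ρ := by
        rw [← ENNReal.rpow_mul, one_div_mul_cancel hq0.ne', ENNReal.rpow_one]

end Averages

section LpLemmas

variable {α : Type*} [MeasurableSpace α] {μ : Measure α} {p : ℝ≥0∞}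

theorem eLpNorm_sub_indicator_le (hp : 1 ≤ p) {K : Set α} (hK : MeasurableSet K) {f g : α → ℝ}
    (hf : AEStronglyMeasurable f μ) (hg : AEStronglyMeasurable g μ) :
    eLpNorm (f - K.indicator g) p μ ≤ eLpNorm (Kᶜ.indicator f) p μ + eLpNorm (f - g) p μ := by
  have hsplit : f - K.indicator g = Kᶜ.indicator f + K.indicator (f - g) := by
    ext x
    by_cases hx : x ∈ K
    · simp [Set.indicator_of_mem hx, Set.indicator_of_notMem (Set.notMem_compl_iff.2 hx)]
    · simp [Set.indicator_of_notMem hx, Set.indicator_of_mem (Set.mem_compl hx)]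
  rw [hsplit]
  refine (eLpNorm_add_le (hf.indicator hK.compl) ((hf.sub hg).indicator hK) hp).trans ?_
  gcongr
  exact eLpNorm_indicator_le _

theorem cauchySeq_toLp_indicator_of_uniformCauchySeqOn [Fact (1 ≤ p)] {K : Set α}
    (hK : MeasurableSet K) (hμK : μ K ≠ ∞) {h : ℕ → α → ℝ}
    (hmem : ∀ k, MemLp (K.indicator (h k)) p μ) (hu : UniformCauchySeqOn h atTop K) :
    CauchySeq fun k => (hmem k).toLp := by
  rw [cauchySeq_iff_tendsto, ← prod_atTop_atTop_eq, uniformity_basis_edist_le.tendsto_right_iff]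
  intro ε hε
  set c := μ K ^ p.toReal⁻¹
  have hc : c ≠ ∞ := rpow_ne_top_of_nonneg (by positivity) hμK
  filter_upwards [hu _ (edist_mem_uniformity (ENNReal.div_pos hε.ne' hc))] with mn hmn
  simp only [Prod.map, Lp.edist_toLp_toLp]
  rw [← Set.indicator_sub', eLpNorm_indicator_eq_eLpNorm_restrict hK]
  calc eLpNorm (h mn.1 - h mn.2) p (μ.restrict K) ≤ (ε / c) • μ.restrict K Set.univ ^ p.toReal⁻¹ :=
        eLpNorm_le_of_ae_enorm_bound <| (ae_restrict_iff' hK).2 <| ae_of_all _ fun x hx => by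
          rw [Pi.sub_apply, ← edist_eq_enorm_sub]; exact (hmn x hx).le
    _ ≤ ε := by
        rw [Measure.restrict_apply_univ, smul_eq_mul, mul_comm]
        exact ENNReal.mul_div_le

theorem exists_measurable_tendsto_eLpNorm_of_cauchySeq [Fact (1 ≤ p)] {g : ℕ → α → ℝ}
    (hg : ∀ k, MemLp (g k) p μ) (hcau : CauchySeq fun k => (hg k).toLp) :
    ∃ h : α → ℝ, Measurable h ∧ MemLp h p μ ∧
      Tendsto (fun k => eLpNorm (g k - h) p μ) atTop (𝓝 0) := by
  obtain ⟨L, hL⟩ := cauchySeq_tendsto_of_complete hcau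
  have hLm := Lp.aestronglyMeasurable L
  refine ⟨hLm.mk L, hLm.stronglyMeasurable_mk.measurable,
    (Lp.memLp L).ae_eq hLm.ae_eq_mk, ?_⟩
  have hdist : ∀ k, eLpNorm (g k - hLm.mk L) p μ = edist ((hg k).toLp) L := fun k => by
    rw [Lp.edist_def]
    exact eLpNorm_congr_ae (((hg k).coeFn_toLp.sub hLm.ae_eq_mk).mono fun x hx => by
      simp only [Pi.sub_apply] at hx ⊢; rw [hx])
  simpa only [hdist] using tendsto_iff_edist_tendsto_0.1 hL

end LpLemmas

theorem exists_strictMono_forall_cauchySeq {ι Y : Type*} [Countable ι] [PseudoMetricSpace Y]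
    [ProperSpace Y] (v : ℕ → ι → Y) (hv : ∀ i, Bornology.IsBounded (Set.range fun k => v k i)) :
    ∃ φ : ℕ → ℕ, StrictMono φ ∧ ∀ i, CauchySeq fun k => v (φ k) i := by
  have hS : IsCompact (Set.univ.pi fun i => closure (Set.range fun k => v k i)) :=
    isCompact_univ_pi fun i => (hv i).isCompact_closure
  obtain ⟨L, -, φ, hφ, hlim⟩ := hS.isSeqCompact fun k =>
    Set.mem_univ_pi.2 fun i => subset_closure (Set.mem_range_self k)
  exact ⟨φ, hφ, fun i => (tendsto_pi_nhds.1 hlim i).cauchySeq⟩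

theorem uniformCauchySeqOn_of_cauchySeq_of_dense {X Y : Type*} [PseudoMetricSpace X]
    [PseudoMetricSpace Y] {F : ℕ → X → Y} {K D : Set X} (hK : IsCompact K) (hD : Dense D)
    (hF : ∀ y ∈ D, CauchySeq fun k => F k y)
    (hequi : ∀ ε > 0, ∃ δ > 0, ∀ k, ∀ x ∈ K, ∀ y, dist x y < δ → dist (F k x) (F k y) ≤ ε) :
    UniformCauchySeqOn F atTop K := by
  intro U hU
  obtain ⟨ε, hε, hεU⟩ := Metric.mem_uniformity_dist.1 hU
  obtain ⟨δ, hδ, hFδ⟩ := hequi (ε / 4) (by positivity)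
  obtain ⟨t, htD, ht, hKt⟩ := hK.elim_finite_subcover_image (b := D) (c := fun y => ball y δ)
    (fun _ _ => isOpen_ball) fun x _ => by
      obtain ⟨y, hyD, hxy⟩ := hD.exists_dist_lt x hδ
      exact Set.mem_biUnion hyD (mem_ball.2 hxy)
  have hnet : ∀ᶠ mn : ℕ × ℕ in atTop ×ˢ atTop, ∀ y ∈ t, dist (F mn.1 y) (F mn.2 y) < ε / 4 :=
    (ht.eventually_all).2 fun y hy => by
      have := (hF y (htD hy)).tendsto_uniformity
      rw [← prod_atTop_atTop_eq] at this
      exact this (dist_mem_uniformity (by positivity))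
  filter_upwards [hnet] with mn hmn x hx
  obtain ⟨y, hyt, hxy⟩ := Set.mem_iUnion₂.1 (hKt hx)
  have hxy' : dist x y < δ := mem_ball.1 hxy
  refine hεU ?_
  calc dist (F mn.1 x) (F mn.2 x)
      ≤ dist (F mn.1 x) (F mn.1 y) + dist (F mn.1 y) (F mn.2 y) + dist (F mn.2 y) (F mn.2 x) :=
        dist_triangle4 _ _ _ _
    _ ≤ ε / 4 + ε / 4 + ε / 4 := by
        gcongr
        · exact hFδ _ x hx y hxy'
        · exact (hmn y hyt).le
        · rw [dist_comm]; exact hFδ _ x hx y hxy'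
    _ < ε := by linarith

theorem cauchySeq_of_forall_exists_cauchySeq_edist_le {X : Type*} [PseudoEMetricSpace X]
    {u : ℕ → X} (h : ∀ ε > 0, ∃ v : ℕ → X, CauchySeq v ∧ ∀ k, edist (u k) (v k) ≤ ε) :
    CauchySeq u := by
  refine uniformity_basis_edist_le.cauchySeq_iff.2 fun ε hε => ?_
  obtain ⟨v, hv, huv⟩ := h (ε / 3) (ENNReal.div_pos hε.ne' ofNat_ne_top)
  obtain ⟨N, hN⟩ := uniformity_basis_edist_le.cauchySeq_iff.1 hv (ε / 3)
    (ENNReal.div_pos hε.ne' ofNat_ne_top)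
  refine ⟨N, fun m hm n hn => ?_⟩
  calc edist (u m) (u n) ≤ edist (u m) (v m) + edist (v m) (v n) + edist (v n) (u n) :=
        edist_triangle4 _ _ _ _
    _ ≤ ε / 3 + ε / 3 + ε / 3 := by
        gcongr
        · exact huv m
        · exact hN m hm n hn
        · rw [edist_comm]; exact huv n
    _ = ε := ENNReal.add_thirds ε

section BallAverage

variable {E : Type*} [NormedAddCommGroup E] [MeasurableSpace E] [BorelSpace E]
  {ν : Measure E} [ν.IsAddHaarMeasure]

/-- `⨍_{ball x r} f`, written over `ball 0 r` so that its measurability in `x` is that of a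
parametric integral. -/
noncomputable def ballAverage (ν : Measure E) (r : ℝ) (f : E → ℝ) (x : E) : ℝ :=
  ⨍ z in ball (0 : E) r, f (x + z) ∂ν

theorem setLIntegral_ball_zero_add (F : E → ℝ≥0∞) (x : E) (r : ℝ) :
    ∫⁻ z in ball (0 : E) r, F (x + z) ∂ν = ∫⁻ t in ball x r, F t ∂ν := by
  rw [← (measurePreserving_add_left ν x).setLIntegral_comp_preimage_emb
    (measurableEmbedding_addLeft x) F (ball x r), preimage_add_left_ball, neg_add_cancel]

theorem enorm_ballAverage_le (r : ℝ) (f : E → ℝ) (x : E) :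
    ‖ballAverage ν r f x‖ₑ ≤ (ν (ball 0 r))⁻¹ * ∫⁻ t in ball x r, ‖f t‖ₑ ∂ν := by
  refine (enorm_average_le_laverage _ _).trans_eq ?_
  rw [laverage_eq, Measure.restrict_apply_univ, setLIntegral_ball_zero_add (fun t => ‖f t‖ₑ),
    ENNReal.div_eq_inv_mul]

variable [ProperSpace E]

theorem measurable_ballAverage {r : ℝ} {f : E → ℝ} (hf : Measurable f) :
    Measurable (ballAverage ν r f) :=
  ((hf.comp measurable_add).stronglyMeasurable.integral_prod_right'
    (ν := ((ν.restrict (ball 0 r)) Set.univ)⁻¹ • ν.restrict (ball 0 r))).measurable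

theorem integrableOn_ball_zero_add {f : E → ℝ} (hf : LocallyIntegrable f ν) (x : E) (r : ℝ) :
    IntegrableOn (fun z => f (x + z)) (ball (0 : E) r) ν := by
  rw [← neg_add_cancel x, ← preimage_add_left_ball]
  exact ((measurePreserving_add_left ν x).integrableOn_comp_preimage
    (measurableEmbedding_addLeft x)).2
    ((hf.integrableOn_isCompact (isCompact_closedBall x r)).mono_set ball_subset_closedBall)

theorem ballAverage_sub_ballAverage {f : E → ℝ} (hf : LocallyIntegrable f ν) (r : ℝ) (x y : E) :
    ballAverage ν r f y - ballAverage ν r f x =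
      ballAverage ν r (fun t => f (t + (y - x)) - f t) x := by
  have hshift : ∀ z, x + z + (y - x) = y + z := fun z => by abel
  simp only [ballAverage, average_eq', hshift]
  exact (integral_sub (integrableOn_ball_zero_add hf y r).to_average
    (integrableOn_ball_zero_add hf x r).to_average).symm

theorem enorm_sub_ballAverage_rpow_le {r : ℝ} (hr : 0 < r) {q : ℝ} (hq : 1 ≤ q) {f : E → ℝ}
    (hf : Measurable f) (hfi : LocallyIntegrable f ν) (x : E) :
    ‖f x - ballAverage ν r f x‖ₑ ^ q ≤
      (ν (ball 0 r))⁻¹ * ∫⁻ z in ball (0 : E) r, ‖f (x + z) - f x‖ₑ ^ q ∂ν := by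
  have : IsFiniteMeasure (ν.restrict (ball 0 r)) :=
    isFiniteMeasure_restrict.2 measure_ball_lt_top.ne
  have : NeZero (ν.restrict (ball 0 r)) :=
    ⟨by simpa [Measure.restrict_eq_zero] using (measure_ball_pos ν (0 : E) hr).ne'⟩
  have havg : ballAverage ν r f x - f x = ⨍ z in ball (0 : E) r, (f (x + z) - f x) ∂ν := by
    rw [ballAverage, average_eq', average_eq', integral_sub
      (integrableOn_ball_zero_add hfi x r).to_average (integrable_const _), integral_const,
      probReal_univ, one_smul]
  rw [enorm_sub_rev, havg]
  refine (enorm_average_rpow_le_laverage hq ((hf.comp (measurable_const_add x)).sub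
    measurable_const).aestronglyMeasurable).trans_eq ?_
  rw [laverage_eq, Measure.restrict_apply_univ, ENNReal.div_eq_inv_mul]
  rfl

theorem eLpNorm_sub_ballAverage_le {μ : Measure E} [SFinite μ] {p : ℝ≥0∞} (hp1 : 1 ≤ p)
    (hp : p ≠ ∞) {r : ℝ} (hr : 0 < r) {f : E → ℝ} (hf : Measurable f)
    (hfi : LocallyIntegrable f ν) {η : ℝ≥0∞}
    (hη : ∀ u : E, ‖u‖ < r → eLpNorm (fun x => f (x + u) - f x) p μ ≤ η) :
    eLpNorm (f - ballAverage ν r f) p μ ≤ η := by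
  set q := p.toReal
  have hq : 1 ≤ q := by simpa using ENNReal.toReal_mono hp hp1
  have hq0 : 0 < q := by linarith
  have hpow : ∀ g : E → ℝ, eLpNorm g p μ ^ q = ∫⁻ x, ‖g x‖ₑ ^ q ∂μ := fun g => by
    rw [eLpNorm_eq_eLpNorm' (by positivity) hp, lintegral_rpow_enorm_eq_rpow_eLpNorm' hq0]
  have hB0 : ν (ball 0 r) ≠ 0 := (measure_ball_pos ν 0 hr).ne'
  have hBtop : ν (ball 0 r) ≠ ∞ := measure_ball_lt_top.ne
  rw [← ENNReal.rpow_le_rpow_iff hq0, hpow]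
  calc ∫⁻ x, ‖(f - ballAverage ν r f) x‖ₑ ^ q ∂μ
      ≤ ∫⁻ x, (ν (ball 0 r))⁻¹ * ∫⁻ z in ball (0 : E) r, ‖f (x + z) - f x‖ₑ ^ q ∂ν ∂μ :=
        lintegral_mono fun x => enorm_sub_ballAverage_rpow_le hr hq hf hfi x
    _ = (ν (ball 0 r))⁻¹ * ∫⁻ z in ball (0 : E) r, ∫⁻ x, ‖f (x + z) - f x‖ₑ ^ q ∂μ ∂ν := by
        rw [lintegral_const_mul' _ _ (ENNReal.inv_ne_top.2 hB0), lintegral_lintegral_swap]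
        exact (((hf.comp measurable_add).sub (hf.comp measurable_fst)).enorm.pow_const
          _).aemeasurable
    _ ≤ (ν (ball 0 r))⁻¹ * ∫⁻ _ in ball (0 : E) r, η ^ q ∂ν := by
        refine mul_le_mul_right (setLIntegral_mono' measurableSet_ball fun z hz => ?_) _
        exact (hpow _).symm.trans_le (ENNReal.rpow_le_rpow (hη z (mem_ball_zero_iff.1 hz)) hq0.le)
    _ = η ^ q := by
        rw [setLIntegral_const, ← mul_assoc, mul_comm, ← mul_assoc,
          ENNReal.mul_inv_cancel hB0 hBtop, one_mul]

theorem eLpNorm_sub_indicator_ballAverage_le {μ : Measure E} [SFinite μ] {p : ℝ≥0∞} (hp1 : 1 ≤ p)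
    (hp : p ≠ ∞) {r : ℝ} (hr : 0 < r) {f : E → ℝ} (hf : Measurable f)
    (hfi : LocallyIntegrable f ν) (A : ℝ) {η : ℝ≥0∞}
    (hη : ∀ u : E, ‖u‖ < r → eLpNorm (fun x => f (x + u) - f x) p μ ≤ η) :
    eLpNorm (f - (closedBall 0 A).indicator (ballAverage ν r f)) p μ ≤
      eLpNorm ({x | A < ‖x‖}.indicator f) p μ + η := by
  have hcompl : (closedBall (0 : E) A)ᶜ = {x | A < ‖x‖} := by ext; simp
  refine (eLpNorm_sub_indicator_le hp1 measurableSet_closedBall hf.aestronglyMeasurable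
    (measurable_ballAverage hf).aestronglyMeasurable).trans ?_
  rw [hcompl]
  gcongr
  exact eLpNorm_sub_ballAverage_le hp1 hp hr hf hfi hη

end BallAverage

section FrechetKolmogorov

variable {E : Type*} [NormedAddCommGroup E] [ProperSpace E] [MeasurableSpace E] [BorelSpace E]
  {ν : Measure E} [ν.IsAddHaarMeasure] {μ : Measure E} {p : ℝ≥0∞}

namespace LpEmbedsL1Loc

theorem exists_enorm_ballAverage_le (hemb : LpEmbedsL1Loc p μ ν) {K : Set E} (hK : IsCompact K)
    {r : ℝ} (hr : 0 < r) :
    ∃ c : ℝ≥0∞, c ≠ ∞ ∧ ∀ f : E → ℝ, Measurable f → ∀ x ∈ K,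
      ‖ballAverage ν r f x‖ₑ ≤ c * eLpNorm f p μ := by
  obtain ⟨C, hC, hCK⟩ := hemb _ (hK.cthickening (r := r))
  refine ⟨(ν (ball 0 r))⁻¹ * C,
    ENNReal.mul_ne_top (ENNReal.inv_ne_top.2 (measure_ball_pos ν 0 hr).ne') hC, fun f hf x hx => ?_⟩
  calc ‖ballAverage ν r f x‖ₑ ≤ (ν (ball 0 r))⁻¹ * ∫⁻ t in ball x r, ‖f t‖ₑ ∂ν :=
        enorm_ballAverage_le r f x
    _ ≤ (ν (ball 0 r))⁻¹ * (C * eLpNorm f p μ) := by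
        gcongr
        exact (lintegral_mono_set (ball_subset_closedBall.trans
          (closedBall_subset_cthickening hx r))).trans (hCK f hf)
    _ = (ν (ball 0 r))⁻¹ * C * eLpNorm f p μ := (mul_assoc _ _ _).symm

theorem memLp_indicator_ballAverage [IsFiniteMeasureOnCompacts μ] (hemb : LpEmbedsL1Loc p μ ν)
    {K : Set E} (hK : IsCompact K) {r : ℝ} (hr : 0 < r) {f : E → ℝ} (hf : Measurable f)
    (hfp : eLpNorm f p μ ≠ ∞) : MemLp (K.indicator (ballAverage ν r f)) p μ := by
  obtain ⟨c, hc, hbound⟩ := hemb.exists_enorm_ballAverage_le hK hr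
  rw [memLp_indicator_iff_restrict hK.measurableSet]
  refine ⟨(measurable_ballAverage hf).aestronglyMeasurable, (eLpNorm_le_of_ae_enorm_bound
    ((ae_restrict_iff' hK.measurableSet).2 (ae_of_all _ (hbound f hf)))).trans_lt ?_⟩
  rw [Measure.restrict_apply_univ]
  exact ENNReal.mul_lt_top (ENNReal.mul_lt_top hc.lt_top hfp.lt_top)
    (ENNReal.rpow_lt_top_of_nonneg (by positivity) hK.measure_lt_top.ne)

theorem exists_subseq_cauchySeq_ballAverage (hemb : LpEmbedsL1Loc p μ ν) {r : ℕ → ℝ}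
    (hr : ∀ m, 0 < r m) {g : ℕ → E → ℝ} (hg : ∀ k, Measurable (g k)) {M : ℝ≥0∞} (hM : M ≠ ∞)
    (hbdd : ∀ k, eLpNorm (g k) p μ ≤ M) :
    ∃ φ : ℕ → ℕ, StrictMono φ ∧ ∀ m, ∀ y ∈ Set.range (TopologicalSpace.denseSeq E),
      CauchySeq fun k => ballAverage ν (r m) (g (φ k)) y := by
  obtain ⟨φ, hφ, hcau⟩ := exists_strictMono_forall_cauchySeq
    (fun k (im : ℕ × ℕ) => ballAverage ν (r im.2) (g k) (TopologicalSpace.denseSeq E im.1))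
    fun ⟨i, m⟩ => by
      obtain ⟨c, hc, hbound⟩ := hemb.exists_enorm_ballAverage_le
        (isCompact_singleton (x := TopologicalSpace.denseSeq E i)) (hr m)
      refine isBounded_iff_forall_norm_le.2 ⟨(c * M).toReal, ?_⟩
      rintro _ ⟨k, rfl⟩
      rw [← ENNReal.ofReal_le_iff_le_toReal (ENNReal.mul_ne_top hc hM), ofReal_norm]
      exact (hbound _ (hg k) _ rfl).trans (by gcongr; exact hbdd k)
  exact ⟨φ, hφ, fun m _ ⟨i, hi⟩ => hi ▸ hcau (i, m)⟩

theorem uniformCauchySeqOn_ballAverage (hemb : LpEmbedsL1Loc p μ ν) {K : Set E}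
    (hK : IsCompact K) {r : ℝ} (hr : 0 < r) {g : ℕ → E → ℝ} (hg : ∀ k, Measurable (g k))
    (hloc : ∀ k, LocallyIntegrable (g k) ν) {D : Set E} (hD : Dense D)
    (hcau : ∀ y ∈ D, CauchySeq fun k => ballAverage ν r (g k) y)
    (htrans : ∀ ε : ℝ, 0 < ε → ∃ δ > 0, ∀ k, ∀ u : E, ‖u‖ < δ →
      eLpNorm (fun x => g k (x + u) - g k x) p μ ≤ ENNReal.ofReal ε) :
    UniformCauchySeqOn (fun k => ballAverage ν r (g k)) atTop K := by
  refine uniformCauchySeqOn_of_cauchySeq_of_dense hK hD hcau fun θ hθ => ?_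
  obtain ⟨c, hc, hbound⟩ := hemb.exists_enorm_ballAverage_le hK hr
  obtain ⟨ε, -, hε0, hε⟩ := ENNReal.lt_iff_exists_real_btwn.1
    (ENNReal.div_pos (ENNReal.ofReal_pos.2 hθ).ne' hc)
  obtain ⟨δ, hδ, hδtrans⟩ := htrans ε (ENNReal.ofReal_pos.1 hε0)
  refine ⟨δ, hδ, fun k x hx y hxy => ?_⟩
  rw [dist_comm, ← ENNReal.ofReal_le_ofReal_iff hθ.le, ← edist_dist, edist_eq_enorm_sub,
    ballAverage_sub_ballAverage (hloc k)]
  calc ‖ballAverage ν r (fun t => g k (t + (y - x)) - g k t) x‖ₑ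
      ≤ c * eLpNorm (fun t => g k (t + (y - x)) - g k t) p μ :=
        hbound _ (((hg k).comp (measurable_add_const _)).sub (hg k)) x hx
    _ ≤ c * (ENNReal.ofReal θ / c) := by
        gcongr
        exact (hδtrans k _ (by rwa [← dist_eq_norm, dist_comm])).trans hε.le
    _ ≤ ENNReal.ofReal θ := ENNReal.mul_div_le

end LpEmbedsL1Loc

theorem exists_subseq_tendsto_eLpNorm [IsFiniteMeasureOnCompacts μ] [SFinite μ] [Fact (1 ≤ p)]
    (hp : p ≠ ∞) (hemb : LpEmbedsL1Loc p μ ν) {g : ℕ → E → ℝ} (hg : ∀ k, Measurable (g k))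
    {M : ℝ≥0∞} (hM : M ≠ ∞) (hbdd : ∀ k, eLpNorm (g k) p μ ≤ M)
    (htail : ∀ ε : ℝ, 0 < ε → ∃ A : ℝ, ∀ k,
      eLpNorm ({x | A < ‖x‖}.indicator (g k)) p μ ≤ ENNReal.ofReal ε)
    (htrans : ∀ ε : ℝ, 0 < ε → ∃ δ > 0, ∀ k, ∀ u : E, ‖u‖ < δ →
      eLpNorm (fun x => g k (x + u) - g k x) p μ ≤ ENNReal.ofReal ε) :
    ∃ φ : ℕ → ℕ, StrictMono φ ∧ ∃ h : E → ℝ, Measurable h ∧ MemLp h p μ ∧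
      Tendsto (fun k => eLpNorm (g (φ k) - h) p μ) atTop (𝓝 0) := by
  have hmem : ∀ k, MemLp (g k) p μ := fun k =>
    ⟨(hg k).aestronglyMeasurable, (hbdd k).trans_lt hM.lt_top⟩
  have hloc : ∀ k, LocallyIntegrable (g k) ν := fun k =>
    hemb.locallyIntegrable (hg k) (hmem k).2.ne
  have hr : ∀ m : ℕ, (0 : ℝ) < 1 / (m + 1) := fun m => Nat.one_div_pos_of_nat
  obtain ⟨φ, hφ, hcau⟩ := hemb.exists_subseq_cauchySeq_ballAverage hr hg hM hbdd
  refine ⟨φ, hφ, exists_measurable_tendsto_eLpNorm_of_cauchySeq (fun k => hmem (φ k))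
    (cauchySeq_of_forall_exists_cauchySeq_edist_le fun ε hε => ?_)⟩
  obtain ⟨η, -, hη0, hη⟩ := ENNReal.lt_iff_exists_real_btwn.1 (ENNReal.half_pos hε.ne')
  obtain ⟨A, hA⟩ := htail η (ENNReal.ofReal_pos.1 hη0)
  obtain ⟨δ, hδ, hδtrans⟩ := htrans η (ENNReal.ofReal_pos.1 hη0)
  obtain ⟨m, hm⟩ := exists_nat_one_div_lt hδ
  have hK := isCompact_closedBall (0 : E) A
  have hmemK := fun k => hemb.memLp_indicator_ballAverage hK (hr m) (hg (φ k)) (hmem (φ k)).2.ne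
  refine ⟨fun k => (hmemK k).toLp, cauchySeq_toLp_indicator_of_uniformCauchySeqOn
    hK.measurableSet hK.measure_lt_top.ne hmemK (hemb.uniformCauchySeqOn_ballAverage hK (hr m)
      (fun k => hg (φ k)) (fun k => hloc (φ k)) (TopologicalSpace.denseRange_denseSeq E) (hcau m)
      fun ε hε => (htrans ε hε).imp fun _ hδ => ⟨hδ.1, fun k => hδ.2 (φ k)⟩), fun k => ?_⟩
  rw [Lp.edist_toLp_toLp]
  calc _ ≤ eLpNorm ({x | A < ‖x‖}.indicator (g (φ k))) p μ + ENNReal.ofReal η :=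
        eLpNorm_sub_indicator_ballAverage_le Fact.out hp (hr m) (hg _) (hloc _) A
          fun u hu => hδtrans _ u (hu.trans hm)
    _ ≤ ε / 2 + ε / 2 := add_le_add ((hA (φ k)).trans hη.le) hη.le
    _ = ε := ENNReal.add_halves ε

end FrechetKolmogorov

theorem stmt_3_general {n : ℕ} (p : ℝ) (hp : 1 ≤ p)
    (w : EuclideanSpace ℝ (Fin n) → ℝ)
    (hw_meas : Measurable w)
    (hw_loc : LocallyIntegrable w volume)
    (hw_pos : ∀ᵐ x ∂(volume : Measure (EuclideanSpace ℝ (Fin n))), 0 < w x)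
    (hw' : 1 < p → LocallyIntegrable (fun x => w x ^ (-(1 : ℝ) / (p - 1))) volume)
    (hw1 : p = 1 → ∀ A : ℝ, 0 < A →
      0 < essInf w (volume.restrict (closedBall (0 : EuclideanSpace ℝ (Fin n)) A)))
    (G : Set (EuclideanSpace ℝ (Fin n) → ℝ))
    (hG_meas : ∀ f ∈ G, Measurable f)
    (hi : ∃ K : ℝ, ∀ f ∈ G, wInt w p f ≤ ENNReal.ofReal K)
    (hii : ∀ ε : ℝ, 0 < ε → ∃ A : ℝ, 0 < A ∧ ∀ f ∈ G,
      (∫⁻ x in {x : EuclideanSpace ℝ (Fin n) | A < ‖x‖},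
          ENNReal.ofReal (|f x| ^ p * w x)) < ENNReal.ofReal (ε ^ p))
    (hiii : ∀ ε : ℝ, 0 < ε → ∃ δ : ℝ, 0 < δ ∧ ∀ f ∈ G,
      ∀ u : EuclideanSpace ℝ (Fin n), ‖u‖ < δ →
        wInt w p (fun x => f (x + u) - f x) < ENNReal.ofReal (ε ^ p)) :
    ∀ g : ℕ → EuclideanSpace ℝ (Fin n) → ℝ, (∀ k, g k ∈ G) →
      ∃ φ : ℕ → ℕ, StrictMono φ ∧ ∃ h : EuclideanSpace ℝ (Fin n) → ℝ,
        Measurable h ∧ wInt w p h < ⊤ ∧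
        Tendsto (fun k => wInt w p (fun x => g (φ k) x - h x)) atTop (nhds 0) := by
  intro g hg
  have hp0 : 0 < p := by linarith
  have : Fact (1 ≤ ENNReal.ofReal p) := ⟨by simpa using ENNReal.ofReal_le_ofReal hp⟩
  have := isFiniteMeasureOnCompacts_withDensity_ofReal hw_loc
  have hwInt : ∀ f, wInt w p f =
      eLpNorm f (ENNReal.ofReal p) (volume.withDensity fun x => ENNReal.ofReal (w x)) ^ p :=
    fun f => lintegral_ofReal_abs_rpow_mul_eq_rpow_eLpNorm hp0 hw_meas f
  obtain ⟨K, hK⟩ := hi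
  obtain ⟨φ, hφ, h, hh, hhp, hlim⟩ := exists_subseq_tendsto_eLpNorm ofReal_ne_top
    (lpEmbedsL1Loc_withDensity hp hw_meas hw_pos hw' hw1) (fun k => hG_meas _ (hg k))
    (rpow_ne_top_of_nonneg (inv_nonneg.2 hp0.le) ofReal_ne_top)
    (fun k => (ENNReal.le_rpow_inv_iff hp0).2 (hwInt (g k) ▸ hK _ (hg k)))
    (fun ε hε => by
      obtain ⟨A, -, hA⟩ := hii ε hε
      refine ⟨A, fun k => le_ofReal_of_rpow_lt_ofReal_rpow hp0 hε.le ?_⟩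
      rw [← setLIntegral_ofReal_abs_rpow_mul_eq_rpow_eLpNorm_indicator hp0 hw_meas
        (measurableSet_lt measurable_const measurable_norm)]
      exact hA _ (hg k))
    (fun ε hε => by
      obtain ⟨δ, hδ, hδtrans⟩ := hiii ε hε
      exact ⟨δ, hδ, fun k u hu =>
        le_ofReal_of_rpow_lt_ofReal_rpow hp0 hε.le (hwInt _ ▸ hδtrans _ (hg k) u hu)⟩)
  refine ⟨φ, hφ, h, hh, (hwInt h).symm ▸ ENNReal.rpow_lt_top_of_nonneg hp0.le hhp.2.ne, ?_⟩
  convert ((ENNReal.continuous_rpow_const (y := p)).tendsto 0).comp hlim using 1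
  · ext k
    exact hwInt _
  · rw [ENNReal.zero_rpow_of_pos hp0]

/-- **Sufficiency in the weighted Fréchet–Kolmogorov theorem, `1 ≤ p < ∞`.**
Let `w` be a weight on `ℝⁿ` with `w^{-1/(p-1)}` locally integrable when `p > 1`
(and `ess inf_{|x|≤A} w > 0` for every `A > 0` when `p = 1`). If `G ⊆ L^p(w)` satisfies
(i) uniform boundedness, (ii) uniformly small tails, and (iii) uniform `L^p(w)`-continuity
of translates, then `G` is relatively (sequentially) compact in `L^p(w)`. -/
theorem stmt_3 {n : ℕ} (p : ℝ) (hp : 1 ≤ p)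
    (w : EuclideanSpace ℝ (Fin n) → ℝ)
    (hw_meas : Measurable w) (hw_nonneg : ∀ x, 0 ≤ w x)
    (hw_loc : LocallyIntegrable w volume)
    (hw_pos : ∀ᵐ x ∂(volume : Measure (EuclideanSpace ℝ (Fin n))), 0 < w x)
    (hw' : 1 < p → LocallyIntegrable (fun x => w x ^ (-(1 : ℝ) / (p - 1))) volume)
    (hw1 : p = 1 → ∀ A : ℝ, 0 < A →
      0 < essInf w (volume.restrict (closedBall (0 : EuclideanSpace ℝ (Fin n)) A)))
    (G : Set (EuclideanSpace ℝ (Fin n) → ℝ))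
    (hG_meas : ∀ f ∈ G, Measurable f)
    (hG_mem : ∀ f ∈ G, wInt w p f < ⊤)
    (hi : ∃ K : ℝ, ∀ f ∈ G, wInt w p f ≤ ENNReal.ofReal K)
    (hii : ∀ ε : ℝ, 0 < ε → ∃ A : ℝ, 0 < A ∧ ∀ f ∈ G,
      (∫⁻ x in {x : EuclideanSpace ℝ (Fin n) | A < ‖x‖},
          ENNReal.ofReal (|f x| ^ p * w x)) < ENNReal.ofReal (ε ^ p))
    (hiii : ∀ ε : ℝ, 0 < ε → ∃ δ : ℝ, 0 < δ ∧ ∀ f ∈ G,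
      ∀ u : EuclideanSpace ℝ (Fin n), ‖u‖ < δ →
        wInt w p (fun x => f (x + u) - f x) < ENNReal.ofReal (ε ^ p)) :
    ∀ g : ℕ → EuclideanSpace ℝ (Fin n) → ℝ, (∀ k, g k ∈ G) →
      ∃ φ : ℕ → ℕ, StrictMono φ ∧ ∃ h : EuclideanSpace ℝ (Fin n) → ℝ,
        Measurable h ∧ wInt w p h < ⊤ ∧
        Tendsto (fun k => wInt w p (fun x => g (φ k) x - h x)) atTop (nhds 0) :=
  stmt_3_general p hp w hw_meas hw_loc hw_pos hw' hw1 G hG_meas hi hii hiii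
end

section
/- Let w be a weight on ℝⁿ, 0 < p < p₀ < ∞, a = p/p₀, and let f, g be nonnegative measurable functions with ∫|f|^p w ≤ K^p and ∫|g|^p w ≤ K^p. Suppose ∫_{ℝⁿ} |f^a - g^a|^{p₀} w dx < ε^{p₀} for some ε > 0. Then ∫_{ℝⁿ} |f - g|^p w dx ≤ a^{-p₀} ε^p + 2 K^p ε^p. -/
open MeasureTheory ENNReal

/-!
Pointwise, for `0 ≤ t ≤ s` split according to whether `s - t ≤ ε s`. If so,
`(s - t)^p ≤ ε^p s^p`. Otherwise the tangent line of the concave map `x ↦ x^a` at `s` gives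
`a s^(a-1) (s - t) ≤ s^a - t^a`; raising this to the power `p₀` (where `a p₀ = p`) and using
`(s - t)^(p - p₀) ≤ (ε s)^(p - p₀)` yields `(s - t)^p ≤ a^(-p₀) ε^(p - p₀) (s^a - t^a)^p₀`.
Multiplying by `w` and integrating, `ε^(p - p₀) · ε^p₀ = ε^p` produces the stated bound.
-/

namespace Real

theorem mul_rpow_sub_one_mul_sub_le_rpow_sub_rpow {a s t : ℝ} (ha0 : 0 ≤ a) (ha1 : a ≤ 1)
    (hs : 0 < s) (ht : 0 ≤ t) : a * s ^ (a - 1) * (s - t) ≤ s ^ a - t ^ a := by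
  have h := rpow_one_add_le_one_add_mul_self (s := t / s - 1)
    (by linarith [div_nonneg ht hs.le]) ha0 ha1
  have hsa := rpow_pos_of_pos hs a
  rw [add_sub_cancel, div_rpow ht hs.le, div_le_iff₀ hsa] at h
  rw [rpow_sub_one hs.ne']
  field_simp
  field_simp at h
  linarith

theorem sub_rpow_le_of_mul_lt {a p p₀ ε s t : ℝ} (ha0 : 0 < a) (ha1 : a ≤ 1) (hp₀ : 0 ≤ p₀)
    (hap : a * p₀ = p) (hε : 0 < ε) (hs : 0 < s) (ht : 0 ≤ t) (hlt : ε * s < s - t) :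
    (s - t) ^ p ≤ a ^ (-p₀) * ε ^ (p - p₀) * (s ^ a - t ^ a) ^ p₀ := by
  have hd : 0 < s - t := (by positivity : 0 < ε * s).trans hlt
  have hpp₀ : p - p₀ ≤ 0 := by nlinarith
  calc (s - t) ^ p = (s - t) ^ (p - p₀) * (s - t) ^ p₀ := by rw [← rpow_add hd, sub_add_cancel]
    _ ≤ (ε * s) ^ (p - p₀) * (s - t) ^ p₀ := by
      have := rpow_le_rpow_of_nonpos (by positivity) hlt.le hpp₀
      gcongr
    _ = a ^ (-p₀) * ε ^ (p - p₀) * (a * s ^ (a - 1) * (s - t)) ^ p₀ := by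
      rw [mul_rpow hε.le hs.le, mul_rpow (by positivity) hd.le, mul_rpow ha0.le (by positivity),
        ← rpow_mul hs.le, sub_one_mul, hap, rpow_neg ha0.le]
      field_simp
    _ ≤ a ^ (-p₀) * ε ^ (p - p₀) * (s ^ a - t ^ a) ^ p₀ := by
      gcongr
      exact mul_rpow_sub_one_mul_sub_le_rpow_sub_rpow ha0.le ha1 hs ht

theorem abs_sub_rpow_le {a p p₀ ε s t : ℝ} (ha0 : 0 < a) (ha1 : a ≤ 1) (hp₀ : 0 ≤ p₀)
    (hap : a * p₀ = p) (hε : 0 < ε) (hs : 0 ≤ s) (ht : 0 ≤ t) :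
    |s - t| ^ p ≤ a ^ (-p₀) * ε ^ (p - p₀) * |s ^ a - t ^ a| ^ p₀ + ε ^ p * (s ^ p + t ^ p) := by
  wlog hts : t ≤ s generalizing s t
  · have := this ht hs (le_of_not_ge hts)
    rwa [abs_sub_comm, abs_sub_comm (t ^ a), add_comm (t ^ p)] at this
  have hp : 0 ≤ p := hap ▸ mul_nonneg ha0.le hp₀
  have hsta : t ^ a ≤ s ^ a := rpow_le_rpow ht hts ha0.le
  rw [abs_of_nonneg (sub_nonneg.2 hts), abs_of_nonneg (sub_nonneg.2 hsta), mul_add]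
  have hmain : 0 ≤ a ^ (-p₀) * ε ^ (p - p₀) * (s ^ a - t ^ a) ^ p₀ := by
    have := rpow_nonneg (sub_nonneg.2 hsta) p₀
    positivity
  have htp : 0 ≤ ε ^ p * t ^ p := by positivity
  rcases le_or_gt (s - t) (ε * s) with hle | hlt
  · have : (s - t) ^ p ≤ ε ^ p * s ^ p :=
      mul_rpow hε.le hs ▸ rpow_le_rpow (sub_nonneg.2 hts) hle hp
    linarith
  · have hs0 : 0 < s := by
      rcases hs.eq_or_lt with rfl | hs0
      · simp [le_antisymm hts ht] at hlt
      · exact hs0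
    have := sub_rpow_le_of_mul_lt ha0 ha1 hp₀ hap hε hs0 ht hlt
    have : 0 ≤ ε ^ p * s ^ p := by positivity
    linarith

end Real

theorem MeasureTheory.lintegral_ofReal_le_mul_add_mul {α : Type*} [MeasurableSpace α]
    {μ : Measure α} {u v₁ v₂ : α → ℝ} {c₁ c₂ : ℝ} (hc₁ : 0 ≤ c₁) (hc₂ : 0 ≤ c₂)
    (hv₂ : Measurable v₂) (h : ∀ x, u x ≤ c₁ * v₁ x + c₂ * v₂ x) :
    ∫⁻ x, ENNReal.ofReal (u x) ∂μ ≤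
      ENNReal.ofReal c₁ * (∫⁻ x, ENNReal.ofReal (v₁ x) ∂μ)
        + ENNReal.ofReal c₂ * ∫⁻ x, ENNReal.ofReal (v₂ x) ∂μ := by
  calc ∫⁻ x, ENNReal.ofReal (u x) ∂μ
      ≤ ∫⁻ x, ENNReal.ofReal c₁ * ENNReal.ofReal (v₁ x)
          + ENNReal.ofReal c₂ * ENNReal.ofReal (v₂ x) ∂μ := by
        refine lintegral_mono fun x => (ofReal_le_ofReal (h x)).trans ?_
        rw [← ofReal_mul hc₁, ← ofReal_mul hc₂]
        exact ofReal_add_le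
    _ = _ := by
        rw [lintegral_add_right _ (hv₂.ennreal_ofReal.const_mul _),
          lintegral_const_mul' _ _ ofReal_ne_top, lintegral_const_mul' _ _ ofReal_ne_top]

/-- Let `w` be a weight on `ℝⁿ`, `0 < p < p₀ < ∞`, `a = p/p₀`, and `f, g` nonnegative
measurable with `∫ f^p w ≤ K^p` and `∫ g^p w ≤ K^p`. If `∫ |f^a − g^a|^{p₀} w < ε^{p₀}`
for some `ε > 0`, then `∫ |f − g|^p w ≤ a^{-p₀} ε^p + 2 K^p ε^p`. -/
theorem stmt_8 {n : ℕ} (w : EuclideanSpace ℝ (Fin n) → ℝ)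
    (hw_meas : Measurable w) (hw_nonneg : ∀ x, 0 ≤ w x)
    (p p₀ a : ℝ) (hp : 0 < p) (hpp₀ : p < p₀) (ha : a = p / p₀)
    (f g : EuclideanSpace ℝ (Fin n) → ℝ)
    (hf_meas : Measurable f) (hg_meas : Measurable g)
    (hf_nonneg : ∀ x, 0 ≤ f x) (hg_nonneg : ∀ x, 0 ≤ g x)
    (K ε : ℝ) (hK : 0 ≤ K) (hε : 0 < ε)
    (hfK : (∫⁻ x, ENNReal.ofReal (f x ^ p * w x)) ≤ ENNReal.ofReal (K ^ p))
    (hgK : (∫⁻ x, ENNReal.ofReal (g x ^ p * w x)) ≤ ENNReal.ofReal (K ^ p))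
    (hfg : (∫⁻ x, ENNReal.ofReal (|f x ^ a - g x ^ a| ^ p₀ * w x))
        < ENNReal.ofReal (ε ^ p₀)) :
    (∫⁻ x, ENNReal.ofReal (|f x - g x| ^ p * w x))
      ≤ ENNReal.ofReal (a ^ (-p₀) * ε ^ p + 2 * K ^ p * ε ^ p) := by
  have hp₀ : 0 < p₀ := hp.trans hpp₀
  have hap : a * p₀ = p := by rw [ha]; field_simp
  have ha0 : 0 < a := ha ▸ div_pos hp hp₀
  have ha1 : a ≤ 1 := ha ▸ (div_le_one hp₀).2 hpp₀.le
  have hpt : ∀ x, |f x - g x| ^ p * w x ≤ a ^ (-p₀) * ε ^ (p - p₀) *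
      (|f x ^ a - g x ^ a| ^ p₀ * w x) + ε ^ p * (f x ^ p * w x + g x ^ p * w x) := fun x => by
    have := mul_le_mul_of_nonneg_right (Real.abs_sub_rpow_le ha0 ha1 hp₀.le hap hε
      (hf_nonneg x) (hg_nonneg x)) (hw_nonneg x)
    linarith
  have hsplit : ∫⁻ x, ENNReal.ofReal (f x ^ p * w x + g x ^ p * w x) ≤
      (∫⁻ x, ENNReal.ofReal (f x ^ p * w x)) + ∫⁻ x, ENNReal.ofReal (g x ^ p * w x) := by
    simpa only [ofReal_one, one_mul] using lintegral_ofReal_le_mul_add_mul (μ := volume)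
      (u := fun x => f x ^ p * w x + g x ^ p * w x) (v₁ := fun x => f x ^ p * w x)
      (v₂ := fun x => g x ^ p * w x) zero_le_one zero_le_one (by fun_prop)
      fun x => by rw [one_mul, one_mul]
  calc _ ≤ ENNReal.ofReal (a ^ (-p₀) * ε ^ (p - p₀)) *
          (∫⁻ x, ENNReal.ofReal (|f x ^ a - g x ^ a| ^ p₀ * w x))
        + ENNReal.ofReal (ε ^ p) * ∫⁻ x, ENNReal.ofReal (f x ^ p * w x + g x ^ p * w x) :=
        lintegral_ofReal_le_mul_add_mul (by positivity) (by positivity) (by fun_prop) hpt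
    _ ≤ ENNReal.ofReal (a ^ (-p₀) * ε ^ (p - p₀)) * ENNReal.ofReal (ε ^ p₀)
        + ENNReal.ofReal (ε ^ p) * (ENNReal.ofReal (K ^ p) + ENNReal.ofReal (K ^ p)) := by
        gcongr
        exact hsplit.trans (add_le_add hfK hgK)
    _ = ENNReal.ofReal (a ^ (-p₀) * ε ^ p + 2 * K ^ p * ε ^ p) := by
        have hKp : 0 ≤ K ^ p := Real.rpow_nonneg hK p
        rw [← ofReal_add hKp hKp, ← ofReal_mul (by positivity), ← ofReal_mul (by positivity),
          ← ofReal_add (by positivity) (by positivity), mul_assoc, ← Real.rpow_add hε,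
          sub_add_cancel]
        ring_nf
end
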